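/- Let (s,t) ∈ ℂ² with |s|² - |t|² > 1. Then ∫_ℂ ∫_ℂ |K^{(s,t)}(z,w)|² dλ(z) dλ(w) = |s| / (|s|² - |t|² - 1). Consequently T^{(s,t)} is a Hilbert–Schmidt operator on L²(ℂ, dλ) with Hilbert–Schmidt norm √|s| / √(|s|² - |t|² - 1). -/

import Mathlib

open MeasureTheory Complex

noncomputable def gaussMeasure : Measure ℂ :=
  volume.withDensity (fun z => ENNReal.ofReal (Real.exp (-(‖z‖)^2) / Real.pi))

noncomputable def csqrt (z : ℂ) : ℂ := z ^ ((1:ℂ)/2)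

noncomputable def Kst (s t z w : ℂ) : ℂ :=
  (csqrt s)⁻¹ *
    Complex.exp ((t*z^2 - starRingEnd ℂ (t*w^2) + 2*z*(starRingEnd ℂ w)) / (2*s))

/-!
The squared kernel is `‖s‖⁻¹ exp (Re ((t z² - conj (t w²) + 2 z w̄) / s))`, so against the
Gaussian weight both integrations are planar Gaussian integrals
`∫ exp (-m ‖z‖² + Re (a z²) + Re (c z)) dz`, finite for `‖a‖ < m` and evaluated by Fubini
and completing the square twice. The `z`-integral (`m = 1`, `a = t / s`, `c = 2 w̄ / s`)
leaves `k^{-1/2} exp (‖w‖² / k - (1 - 1/k) Re (t w² / s̄))` with `k = ‖s‖² - ‖t‖²`, which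
against the weight `e^{-‖w‖²}` is again of this form with `m = 1 - 1/k`, finite exactly
when `k > 1`.
-/

open Real ComplexConjugate

lemma exp_neg_mul_sq_add_eq {p : ℝ} (hp : 0 < p) (q r x : ℝ) :
    rexp (-p * x ^ 2 + q * x + r)
      = rexp (-p * (x - q / (2 * p)) ^ 2) * rexp (q ^ 2 / (4 * p) + r) := by
  rw [← Real.exp_add]
  congr 1
  field_simp
  ring

lemma integrable_exp_neg_mul_sq_add {p : ℝ} (hp : 0 < p) (q r : ℝ) :
    Integrable fun x : ℝ => rexp (-p * x ^ 2 + q * x + r) := by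
  simp_rw [exp_neg_mul_sq_add_eq hp]
  exact ((integrable_exp_neg_mul_sq hp).comp_sub_right _).mul_const _

lemma integral_exp_neg_mul_sq_add {p : ℝ} (hp : 0 < p) (q r : ℝ) :
    ∫ x : ℝ, rexp (-p * x ^ 2 + q * x + r) = √(π / p) * rexp (q ^ 2 / (4 * p) + r) := by
  simp_rw [exp_neg_mul_sq_add_eq hp, integral_mul_const]
  rw [integral_sub_right_eq_self (fun x => rexp (-p * x ^ 2)), integral_gaussian]

lemma exp_neg_quadratic_eq_slice (A B C D E x y : ℝ) :
    rexp (-(A * x ^ 2 + B * y ^ 2 + C * x * y) + D * x + E * y)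
      = rexp (-B * y ^ 2 + (E - C * x) * y + (-A * x ^ 2 + D * x)) := by
  ring_nf

lemma integral_exp_neg_quadratic_slice {A B C : ℝ} (hB : 0 < B) (D E x : ℝ) :
    ∫ y : ℝ, rexp (-(A * x ^ 2 + B * y ^ 2 + C * x * y) + D * x + E * y)
      = √(π / B) * rexp (-(A - C ^ 2 / (4 * B)) * x ^ 2 + (D - C * E / (2 * B)) * x
          + E ^ 2 / (4 * B)) := by
  simp_rw [exp_neg_quadratic_eq_slice, integral_exp_neg_mul_sq_add hB]
  congr 2
  field_simp
  ring

theorem integral_exp_neg_quadratic_prod {A B C : ℝ} (hB : 0 < B) (hd : C ^ 2 < 4 * A * B)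
    (D E : ℝ) :
    ∫ z : ℝ × ℝ, rexp (-(A * z.1 ^ 2 + B * z.2 ^ 2 + C * z.1 * z.2) + D * z.1 + E * z.2)
      = 2 * π / √(4 * A * B - C ^ 2)
          * rexp ((B * D ^ 2 + A * E ^ 2 - C * D * E) / (4 * A * B - C ^ 2)) := by
  have hp : 0 < A - C ^ 2 / (4 * B) := by
    rw [sub_pos, div_lt_iff₀ (by positivity)]; linarith
  have hint : Integrable (fun z : ℝ × ℝ =>
      rexp (-(A * z.1 ^ 2 + B * z.2 ^ 2 + C * z.1 * z.2) + D * z.1 + E * z.2)) := by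
    rw [Measure.volume_eq_prod, integrable_prod_iff (by fun_prop)]
    refine ⟨.of_forall fun x => ?_, ?_⟩
    · simp_rw [exp_neg_quadratic_eq_slice]
      exact integrable_exp_neg_mul_sq_add hB _ _
    · simp_rw [Real.norm_of_nonneg (Real.exp_pos _).le, integral_exp_neg_quadratic_slice hB]
      exact (integrable_exp_neg_mul_sq_add hp _ _).const_mul _
  rw [Measure.volume_eq_prod, integral_prod _ hint]
  simp_rw [integral_exp_neg_quadratic_slice hB]
  rw [integral_const_mul, integral_exp_neg_mul_sq_add hp, ← mul_assoc,
    ← Real.sqrt_mul (by positivity)]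
  have h4 : 0 < 4 * A * B - C ^ 2 := by linarith
  congr 1
  · rw [show π / B * (π / (A - C ^ 2 / (4 * B))) = (2 * π) ^ 2 / (4 * A * B - C ^ 2) by
      field_simp; ring, Real.sqrt_div' _ h4.le, Real.sqrt_sq (by positivity)]
  · congr 1
    rw [show A - C ^ 2 / (4 * B) = (4 * A * B - C ^ 2) / (4 * B) by field_simp]
    have hB' := hB.ne'
    have h4' := h4.ne'
    rw [div_add_div _ _ (by simp [hB', h4']) (by simp [hB']),
      div_eq_div_iff (by simp [hB', h4']) h4']
    field_simp
    ring

theorem integral_exp_neg_mul_norm_sq_add_re {m : ℝ} {a : ℂ} (ha : ‖a‖ < m) (c : ℂ) :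
    ∫ z : ℂ, rexp (-m * ‖z‖ ^ 2 + (a * z ^ 2).re + (c * z).re)
      = π / √(m ^ 2 - ‖a‖ ^ 2)
          * rexp ((m * ‖c‖ ^ 2 + (conj a * c ^ 2).re) / (4 * (m ^ 2 - ‖a‖ ^ 2))) := by
  have hnorm : ‖a‖ ^ 2 = a.re ^ 2 + a.im ^ 2 := by rw [Complex.sq_norm, normSq_apply]; ring
  have hdisc : 4 * (m - a.re) * (m + a.re) - (2 * a.im) ^ 2 = 4 * (m ^ 2 - ‖a‖ ^ 2) := by
    rw [hnorm]; ring
  have hpos : 0 < m ^ 2 - ‖a‖ ^ 2 := by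
    nlinarith [norm_nonneg a]
  have hB : 0 < m + a.re := by
    linarith [neg_abs_le a.re, abs_re_le_norm a]
  have hexp (z : ℂ) : -m * ‖z‖ ^ 2 + (a * z ^ 2).re + (c * z).re
      = -((m - a.re) * z.re ^ 2 + (m + a.re) * z.im ^ 2 + 2 * a.im * z.re * z.im)
          + c.re * z.re + -c.im * z.im := by
    rw [Complex.sq_norm, normSq_apply]
    simp only [mul_re, mul_im, pow_two]
    ring
  simp_rw [hexp]
  have hchange := volume_preserving_equiv_real_prod.integral_comp'
    (g := fun z : ℝ × ℝ => rexp (-((m - a.re) * z.1 ^ 2 + (m + a.re) * z.2 ^ 2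
      + 2 * a.im * z.1 * z.2) + c.re * z.1 + -c.im * z.2))
  simp only [measurableEquivRealProd_apply] at hchange
  rw [hchange, integral_exp_neg_quadratic_prod hB (by rw [← sub_pos, hdisc]; positivity), hdisc,
    Real.sqrt_mul' _ hpos.le]
  congr 1
  · rw [show √4 = 2 by rw [show (4:ℝ) = 2 ^ 2 by norm_num, Real.sqrt_sq zero_le_two]]
    field_simp
  · congr 2
    rw [Complex.sq_norm, normSq_apply]
    simp only [mul_re, mul_im, conj_re, conj_im, pow_two]
    ring

lemma integral_gaussMeasure (g : ℂ → ℝ) :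
    ∫ z, g z ∂gaussMeasure = ∫ z, rexp (-‖z‖ ^ 2) / π * g z := by
  rw [gaussMeasure, integral_withDensity_eq_integral_toReal_smul (by fun_prop)
    (.of_forall fun _ => ENNReal.ofReal_lt_top)]
  congr 1 with z
  rw [ENNReal.toReal_ofReal (by positivity), smul_eq_mul]

lemma norm_csqrt_sq (z : ℂ) : ‖csqrt z‖ ^ 2 = ‖z‖ := by
  rw [← norm_pow, csqrt, one_div, cpow_ofNat_inv_pow]

lemma norm_Kst_sq (s t z w : ℂ) :
    ‖Kst s t z w‖ ^ 2
      = ‖s‖⁻¹ * rexp (((t * z ^ 2 - conj (t * w ^ 2) + 2 * z * conj w) / s).re) := by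
  rw [Kst, norm_mul, mul_pow, norm_inv, inv_pow, norm_csqrt_sq, norm_exp, ← Real.exp_nat_mul,
    div_mul_eq_div_div_swap, div_ofNat_re]
  push_cast
  ring_nf

lemma integral_norm_Kst_sq_gaussMeasure {s t : ℂ} (hts : ‖t‖ < ‖s‖) (w : ℂ) :
    ∫ z, ‖Kst s t z w‖ ^ 2 ∂gaussMeasure
      = (√(‖s‖ ^ 2 - ‖t‖ ^ 2))⁻¹ * rexp (‖w‖ ^ 2 / (‖s‖ ^ 2 - ‖t‖ ^ 2)
          - (1 - (‖s‖ ^ 2 - ‖t‖ ^ 2)⁻¹) * (t * w ^ 2 / conj s).re) := by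
  have hS : 0 < ‖s‖ := (norm_nonneg t).trans_lt hts
  have hk : 0 < ‖s‖ ^ 2 - ‖t‖ ^ 2 := by nlinarith [norm_nonneg t]
  set k := ‖s‖ ^ 2 - ‖t‖ ^ 2 with hk_def
  obtain ⟨R, hR⟩ : ∃ R, R = (t * w ^ 2 / conj s).re := ⟨_, rfl⟩
  have hpt (z : ℂ) : rexp (-‖z‖ ^ 2) / π * ‖Kst s t z w‖ ^ 2
      = (π * ‖s‖)⁻¹ * rexp (-R)
        * rexp (-1 * ‖z‖ ^ 2 + (t / s * z ^ 2).re + (2 * conj w / s * z).re) := by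
    have hsplit : (t * z ^ 2 - conj (t * w ^ 2) + 2 * z * conj w) / s
        = t / s * z ^ 2 - conj (t * w ^ 2 / conj s) + 2 * conj w / s * z := by
      simp only [map_div₀, map_mul, conj_conj]; ring
    rw [norm_Kst_sq, hsplit, add_re, sub_re, conj_re, ← hR]
    simp only [Real.exp_add, Real.exp_sub, Real.exp_neg, neg_one_mul]
    ring
  have hts1 : ‖t / s‖ < 1 := by rwa [norm_div, div_lt_one hS]
  have hdisc : 1 ^ 2 - ‖t / s‖ ^ 2 = k / ‖s‖ ^ 2 := by
    rw [norm_div, div_pow, hk_def]; field_simp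
  have hc : ‖2 * conj w / s‖ ^ 2 = 4 * ‖w‖ ^ 2 / ‖s‖ ^ 2 := by
    rw [norm_div, norm_mul, Complex.norm_conj]; norm_num; ring
  have hac : (conj (t / s) * (2 * conj w / s) ^ 2).re = 4 * R / ‖s‖ ^ 2 := by
    have : conj (t / s) * (2 * conj w / s) ^ 2
        = ((4 / ‖s‖ ^ 2 : ℝ) : ℂ) * conj (t * w ^ 2 / conj s) := by
      push_cast
      rw [← mul_conj']
      simp only [map_div₀, map_mul, map_pow, conj_conj]
      field_simp
      ring
    rw [this, re_ofReal_mul, conj_re, ← hR]; ring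
  simp_rw [integral_gaussMeasure, hpt, integral_const_mul,
    integral_exp_neg_mul_norm_sq_add_re hts1, hdisc, hc, hac,
    Real.sqrt_div' _ (sq_nonneg _), Real.sqrt_sq hS.le]
  have hexp : -R + (1 * (4 * ‖w‖ ^ 2 / ‖s‖ ^ 2) + 4 * R / ‖s‖ ^ 2) / (4 * (k / ‖s‖ ^ 2))
      = ‖w‖ ^ 2 / k - (1 - k⁻¹) * R := by
    field_simp; ring
  rw [← hR, ← hexp, Real.exp_add]
  field_simp

theorem integral_integral_norm_Kst_sq_gaussMeasure {s t : ℂ} (hk : 1 < ‖s‖ ^ 2 - ‖t‖ ^ 2) :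
    ∫ w, ∫ z, ‖Kst s t z w‖ ^ 2 ∂gaussMeasure ∂gaussMeasure
      = ‖s‖ / (‖s‖ ^ 2 - ‖t‖ ^ 2 - 1) := by
  have hts : ‖t‖ < ‖s‖ := by nlinarith [norm_nonneg t, norm_nonneg s]
  have hS : 0 < ‖s‖ := (norm_nonneg t).trans_lt hts
  simp_rw [integral_norm_Kst_sq_gaussMeasure hts]
  set k := ‖s‖ ^ 2 - ‖t‖ ^ 2 with hk_def
  set m := 1 - k⁻¹ with hm_def
  have hm : 0 < m := sub_pos.mpr (inv_lt_one_of_one_lt₀ hk)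
  have hpt (w : ℂ) : rexp (-‖w‖ ^ 2) / π * ((√k)⁻¹
        * rexp (‖w‖ ^ 2 / k - m * (t * w ^ 2 / conj s).re))
      = (π * √k)⁻¹ * rexp (-m * ‖w‖ ^ 2 + (-m * t / conj s * w ^ 2).re + (0 * w).re) := by
    have hre : (-m * t / conj s * w ^ 2).re = -m * (t * w ^ 2 / conj s).re := by
      rw [← re_ofReal_mul]; push_cast; ring_nf
    rw [hre, zero_mul, zero_re, add_zero,
      show -m * ‖w‖ ^ 2 + -m * (t * w ^ 2 / conj s).re
        = -‖w‖ ^ 2 + (‖w‖ ^ 2 / k - m * (t * w ^ 2 / conj s).re) by rw [hm_def]; ring,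
      Real.exp_add]
    ring
  have hnorm : ‖-m * t / conj s‖ ^ 2 = m ^ 2 * ‖t‖ ^ 2 / ‖s‖ ^ 2 := by
    rw [norm_div, norm_mul, norm_neg, Complex.norm_conj, Complex.norm_real,
      Real.norm_of_nonneg hm.le]
    ring
  have ha : ‖-m * t / conj s‖ < m := by
    rw [← pow_lt_pow_iff_left₀ (norm_nonneg _) hm.le two_ne_zero, hnorm,
      div_lt_iff₀ (by positivity)]
    nlinarith
  simp_rw [integral_gaussMeasure, hpt, integral_const_mul,
    integral_exp_neg_mul_norm_sq_add_re ha, hnorm]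
  have hdisc : m ^ 2 - m ^ 2 * ‖t‖ ^ 2 / ‖s‖ ^ 2 = (m * √k / ‖s‖) ^ 2 := by
    rw [div_pow, mul_pow, Real.sq_sqrt (by positivity), hk_def]
    field_simp
  have hmk : m * k = k - 1 := by rw [hm_def]; field_simp
  rw [hdisc, Real.sqrt_sq (by positivity)]
  simp only [norm_zero, ne_eq, OfNat.ofNat_ne_zero, not_false_eq_true, zero_pow, mul_zero,
    zero_re, zero_add, zero_div, Real.exp_zero, mul_one]
  rw [← hmk]
  field_simp
  rw [Real.sq_sqrt (by positivity)]

theorem kernel_HilbertSchmidt (s t : ℂ)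
    (h : 1 < (‖s‖)^2 - (‖t‖)^2) :
    (∫ w, ∫ z, (‖Kst s t z w‖)^2 ∂gaussMeasure ∂gaussMeasure)
      = ‖s‖ / ((‖s‖)^2 - (‖t‖)^2 - 1) ∧
    Real.sqrt (∫ w, ∫ z, (‖Kst s t z w‖)^2 ∂gaussMeasure ∂gaussMeasure)
      = Real.sqrt (‖s‖) / Real.sqrt ((‖s‖)^2 - (‖t‖)^2 - 1) := by
  have hHS := integral_integral_norm_Kst_sq_gaussMeasure h
  exact ⟨hHS, by rw [hHS, Real.sqrt_div (norm_nonneg s)]⟩
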